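/- arXiv:1702.06203 — 2 statements merged into one kernel-verified Lean document; each statement's English description precedes it below -/
import Mathlib

section
/- Let G be a graph containing k edge-disjoint spanning trees, and let S ⊆ V(G). Then ω(G \ S) ≤ Σ_{v∈S} (d_G(v)/k − 1) + 1 − (1/k)·e_G(S), where ω(G \ S) is the number of components after deleting the vertices of S and e_G(S) is the number of edges of G with both endpoints in S. -/
open SimpleGraph

variable {V : Type*}

/-- Number of connected components. -/
noncomputable def numComponents (G : SimpleGraph V) : ℕ :=
  Nat.card G.ConnectedComponent

/-- Degree of a vertex. -/
noncomputable def deg (G : SimpleGraph V) (v : V) : ℕ := (G.neighborSet v).ncard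

/-- Number of edges of `G` with both ends in `S`. -/
noncomputable def edgesIn (G : SimpleGraph V) (S : Set V) : ℕ :=
  {e ∈ G.edgeSet | ∀ v ∈ e, v ∈ S}.ncard

/-- `G \ [S, F]`: remove all edges incident to `S` except edges of `F`. -/
def delExcept (G F : SimpleGraph V) (S : Set V) : SimpleGraph V where
  Adj x y := G.Adj x y ∧ (F.Adj x y ∨ (x ∉ S ∧ y ∉ S))
  symm := by
    constructor
    rintro x y ⟨h1, h2⟩
    exact ⟨h1.symm, h2.elim (fun hf => Or.inl hf.symm) (fun hc => Or.inr ⟨hc.2, hc.1⟩)⟩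
  loopless := ⟨fun x h => G.irrefl h.1⟩

/-- `m`-tree-connected: contains `m` pairwise edge-disjoint spanning trees. -/
def IsTreeConnected (m : ℕ) (G : SimpleGraph V) : Prop :=
  ∃ T : Fin m → SimpleGraph V,
    (∀ i, T i ≤ G) ∧ (∀ i, (T i).Connected ∧ (T i).IsAcyclic) ∧
    ∀ i j, i ≠ j → Disjoint (T i).edgeSet (T j).edgeSet

/-- Two vertices lie in a common `m`-tree-connected induced subgraph, i.e. in the same
`m`-tree-connected component. -/
def sameTC (m : ℕ) (G : SimpleGraph V) (u v : V) : Prop :=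
  ∃ W : Set V, u ∈ W ∧ v ∈ W ∧ IsTreeConnected m (G.induce W)

/-- Tree-connectivity measure `Ω_m`. -/
noncomputable def Omega (m : ℕ) (G : SimpleGraph V) : ℝ :=
  (Nat.card (Quot (sameTC m G)) : ℝ) -
    ({e ∈ G.edgeSet | ∃ x y, e = s(x, y) ∧ ¬ sameTC m G x y}.ncard : ℝ) / m

/-- `k`-edge-connected. -/
def EdgeConnected (k : ℕ) (G : SimpleGraph V) : Prop :=
  ∀ E' : Set (Sym2 V), E'.ncard < k → (G.deleteEdges E').Connected

/-- Contraction of a vertex set to a single vertex. -/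
noncomputable def vrep (X : Set V) (v : V) : Option {v : V // v ∉ X} :=
  @dite _ (v ∈ X) (Classical.dec _) (fun _ => none) (fun h => some ⟨v, h⟩)

noncomputable def contract (G : SimpleGraph V) (X : Set V) :
    SimpleGraph (Option {v : V // v ∉ X}) where
  Adj a b := a ≠ b ∧ ∃ x y, G.Adj x y ∧ vrep X x = a ∧ vrep X y = b
  symm := by
    constructor
    rintro a b ⟨hne, x, y, h, hx, hy⟩
    exact ⟨hne.symm, y, x, h.symm, hy, hx⟩
  loopless := ⟨fun a h => h.1 rfl⟩

/-- Contraction of every component of `F`. -/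
def contractComponents (G F : SimpleGraph V) : SimpleGraph F.ConnectedComponent where
  Adj a b := a ≠ b ∧ ∃ x y, G.Adj x y ∧ F.connectedComponentMk x = a ∧ F.connectedComponentMk y = b
  symm := by
    constructor
    rintro a b ⟨hne, x, y, h, hx, hy⟩
    exact ⟨hne.symm, y, x, h.symm, hy, hx⟩
  loopless := ⟨fun a h => h.1 rfl⟩

/-- Number of edges of `G` incident to `v` joining different components of `F`. -/
noncomputable def degSep (G F : SimpleGraph V) (v : V) : ℕ :=
  {w | G.Adj v w ∧ ¬ F.Reachable v w}.ncard

/-- Number of edges of `G` with both ends in `S` joining different components of `F`. -/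
noncomputable def edgesInSep (G F : SimpleGraph V) (S : Set V) : ℕ :=
  {e : Sym2 V | ∃ x y, e = s(x, y) ∧ G.Adj x y ∧ x ∈ S ∧ y ∈ S ∧ ¬ F.Reachable x y}.ncard

/-- `K_{1,n}`-free. -/
def K1nFree (n : ℕ) (G : SimpleGraph V) : Prop :=
  ¬ ∃ (c : V) (A : Finset V), A.card = n ∧ (∀ a ∈ A, G.Adj c a) ∧
      ∀ a ∈ A, ∀ b ∈ A, a ≠ b → ¬ G.Adj a b

/-- A spanning closed walk meeting each vertex `v` at most `f v` times. -/
def HasClosedSpanningWalk [DecidableEq V] (G : SimpleGraph V) (f : V → ℕ) : Prop :=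
  ∃ (u : V) (w : G.Walk u u), (∀ v, v ∈ w.support) ∧ ∀ v, w.support.tail.count v ≤ f v

lemma aux_cc_le_of_le {V : Type*} [Fintype V] {H G : SimpleGraph V} (h : H ≤ G) :
    Nat.card G.ConnectedComponent ≤ Nat.card H.ConnectedComponent := by
  apply Nat.card_le_card_of_surjective (ConnectedComponent.map (Hom.ofLE h))
  intro C
  refine C.ind fun v => ⟨H.connectedComponentMk v, ?_⟩
  rw [ConnectedComponent.map_mk]
  rfl

lemma aux_reach_delete {V : Type*} {H : SimpleGraph V} {x y u v : V}
    (h : H.Reachable u v) :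
    (H.deleteEdges {s(x,y)}).Reachable u v ∨
      (((H.deleteEdges {s(x,y)}).Reachable u x ∨ (H.deleteEdges {s(x,y)}).Reachable u y) ∧
       ((H.deleteEdges {s(x,y)}).Reachable v x ∨ (H.deleteEdges {s(x,y)}).Reachable v y)) := by
  obtain ⟨w⟩ := h
  induction w with
  | nil => exact Or.inl (Reachable.refl _)
  | @cons a b c hab p ih =>
    by_cases he : s(a,b) = s(x,y)
    · rw [Sym2.eq_iff] at he
      have ha : (H.deleteEdges {s(x,y)}).Reachable a x ∨ (H.deleteEdges {s(x,y)}).Reachable a y := by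
        rcases he with ⟨rfl, rfl⟩ | ⟨rfl, rfl⟩
        · exact Or.inl (Reachable.refl _)
        · exact Or.inr (Reachable.refl _)
      have hb : (H.deleteEdges {s(x,y)}).Reachable b x ∨ (H.deleteEdges {s(x,y)}).Reachable b y := by
        rcases he with ⟨rfl, rfl⟩ | ⟨rfl, rfl⟩
        · exact Or.inr (Reachable.refl _)
        · exact Or.inl (Reachable.refl _)
      refine Or.inr ⟨ha, ?_⟩
      rcases ih with hbc | ⟨_, hc⟩
      · rcases hb with h1 | h1
        · exact Or.inl (hbc.symm.trans h1)
        · exact Or.inr (hbc.symm.trans h1)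
      · exact hc
    · have hab' : (H.deleteEdges {s(x,y)}).Adj a b := by
        rw [deleteEdges_adj]; exact ⟨hab, by simpa using he⟩
      rcases ih with hbc | ⟨hb, hc⟩
      · exact Or.inl (hab'.reachable.trans hbc)
      · refine Or.inr ⟨?_, hc⟩
        rcases hb with h1 | h1
        · exact Or.inl (hab'.reachable.trans h1)
        · exact Or.inr (hab'.reachable.trans h1)

lemma aux_card_cc_deleteEdge {V : Type*} [Fintype V] (H : SimpleGraph V) (x y : V) :
    Nat.card (H.deleteEdges {s(x,y)}).ConnectedComponent ≤ Nat.card H.ConnectedComponent + 1 := by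
  classical
  set H' := H.deleteEdges {s(x,y)} with hH'
  have hle : H' ≤ H := deleteEdges_le _
  set f : H'.ConnectedComponent → H.ConnectedComponent ⊕ Unit := fun C =>
    if C = H'.connectedComponentMk x then Sum.inr ()
    else Sum.inl (C.map (Hom.ofLE hle)) with hf
  have hinj : Function.Injective f := by
    intro C1 C2 hC
    by_cases h1 : C1 = H'.connectedComponentMk x
    · by_cases h2 : C2 = H'.connectedComponentMk x
      · rw [h1, h2]
      · simp [hf, h1, h2] at hC
    · by_cases h2 : C2 = H'.connectedComponentMk x
      · simp [hf, h1, h2] at hC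
      · simp only [hf, if_neg h1, if_neg h2, Sum.inl.injEq] at hC
        obtain ⟨u, rfl⟩ := C1.exists_rep
        obtain ⟨v, rfl⟩ := C2.exists_rep
        have hreach : H.Reachable u v := ConnectedComponent.eq.mp hC
        rcases aux_reach_delete (x := x) (y := y) hreach with h | ⟨hu, hv⟩
        · exact ConnectedComponent.eq.mpr h
        · rcases hu with hu | hu
          · exact absurd (ConnectedComponent.eq.mpr hu) h1
          · rcases hv with hv | hv
            · exact absurd (ConnectedComponent.eq.mpr hv) h2
            · exact ConnectedComponent.eq.mpr (hu.trans hv.symm)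
  calc Nat.card H'.ConnectedComponent ≤ Nat.card (H.ConnectedComponent ⊕ Unit) :=
        Nat.card_le_card_of_injective f hinj
    _ = Nat.card H.ConnectedComponent + 1 := by rw [Nat.card_sum]; simp

lemma aux_card_cc_deleteEdges {V : Type*} [Fintype V] (D : Finset (Sym2 V)) (H : SimpleGraph V) :
    Nat.card (H.deleteEdges ↑D).ConnectedComponent ≤ Nat.card H.ConnectedComponent + D.card := by
  classical
  induction D using Finset.induction_on generalizing H with
  | empty => simp [deleteEdges_empty]
  | @insert e D he ih =>
    have hrw : H.deleteEdges ↑(insert e D) = (H.deleteEdges {e}).deleteEdges ↑D := by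
      rw [deleteEdges_deleteEdges, Finset.coe_insert, Set.insert_eq]
    rw [hrw, Finset.card_insert_of_notMem he]
    induction e using Sym2.ind with
    | _ x y =>
      calc Nat.card ((H.deleteEdges {s(x,y)}).deleteEdges ↑D).ConnectedComponent
          ≤ Nat.card (H.deleteEdges {s(x,y)}).ConnectedComponent + D.card := ih _
        _ ≤ (Nat.card H.ConnectedComponent + 1) + D.card := by
            have := aux_card_cc_deleteEdge H x y; omega
        _ = Nat.card H.ConnectedComponent + (D.card + 1) := by omega

lemma aux_card_cc_connected {V : Type*} {T : SimpleGraph V} (h : T.Connected) :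
    Nat.card T.ConnectedComponent = 1 := by
  refine Nat.card_eq_one_iff_unique.mpr ⟨⟨fun a b => ?_⟩, ⟨T.connectedComponentMk h.nonempty.some⟩⟩
  obtain ⟨u, rfl⟩ := a.exists_rep
  obtain ⟨v, rfl⟩ := b.exists_rep
  exact ConnectedComponent.eq.mpr (h.preconnected u v)

lemma aux_induce_card {V : Type*} [Fintype V] (T : SimpleGraph V) (S : Finset V) :
    Nat.card (T.induce (↑S : Set V)ᶜ).ConnectedComponent + S.card ≤
      Nat.card (T.deleteEdges {e ∈ T.edgeSet | ∃ v ∈ e, v ∈ S}).ConnectedComponent := by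
  classical
  set ES : Set (Sym2 V) := {e ∈ T.edgeSet | ∃ v ∈ e, v ∈ S} with hES
  set H := T.deleteEdges ES with hH
  have hiso : ∀ a b : V, H.Adj a b → a ∉ S ∧ b ∉ S := by
    intro a b hab
    rw [hH, deleteEdges_adj] at hab
    constructor
    · intro haS
      exact hab.2 ⟨hab.1, a, Sym2.mem_mk_left a b, haS⟩
    · intro hbS
      exact hab.2 ⟨hab.1, b, Sym2.mem_mk_right a b, hbS⟩
  have homrel : ∀ a b : ↥((↑S : Set V)ᶜ), (T.induce (↑S : Set V)ᶜ).Adj a b → H.Adj a.val b.val := by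
    intro a b hab
    rw [hH, deleteEdges_adj]
    refine ⟨hab, fun hmem => ?_⟩
    obtain ⟨-, v, hv, hvS⟩ := hmem
    rw [Sym2.mem_iff] at hv
    rcases hv with rfl | rfl
    · exact a.prop hvS
    · exact b.prop hvS
  let φ : (T.induce (↑S : Set V)ᶜ) →g H := ⟨Subtype.val, fun {a b} h => homrel a b h⟩
  have key : ∀ (u v : V), H.Walk u v → ∀ (hu : u ∈ (↑S : Set V)ᶜ) (hv : v ∈ (↑S : Set V)ᶜ),
      (T.induce (↑S : Set V)ᶜ).Reachable ⟨u, hu⟩ ⟨v, hv⟩ := by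
    intro u v w
    induction w with
    | nil => intro hu hv; exact Reachable.refl _
    | @cons a b c hab p ih =>
      intro hu hv
      have hb : b ∈ (↑S : Set V)ᶜ := (hiso _ _ hab).2
      have hadj : (T.induce (↑S : Set V)ᶜ).Adj ⟨a, hu⟩ ⟨b, hb⟩ := by
        rw [hH, deleteEdges_adj] at hab
        exact hab.1
      exact hadj.reachable.trans (ih hb hv)
  have keyS : ∀ (u v : V), H.Reachable u v → u ∈ S → u = v := by
    intro u v h huS
    obtain ⟨w⟩ := h
    cases w with
    | nil => rfl
    | cons hab p => exact absurd huS (hiso _ _ hab).1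
  let F : (T.induce (↑S : Set V)ᶜ).ConnectedComponent ⊕ ↥S → H.ConnectedComponent := fun z =>
    match z with
    | Sum.inl C => C.map φ
    | Sum.inr v => H.connectedComponentMk v.val
  have hinj : Function.Injective F := by
    rintro (C1 | v1) (C2 | v2) hF
    · obtain ⟨a, rfl⟩ := C1.exists_rep
      obtain ⟨b, rfl⟩ := C2.exists_rep
      have hr : H.Reachable a.val b.val := ConnectedComponent.eq.mp hF
      obtain ⟨w⟩ := hr
      exact congrArg Sum.inl (ConnectedComponent.eq.mpr (key _ _ w a.prop b.prop))
    · obtain ⟨a, rfl⟩ := C1.exists_rep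
      have hr : H.Reachable v2.val a.val := (ConnectedComponent.eq.mp hF).symm
      exact absurd (keyS _ _ hr v2.prop ▸ v2.prop) a.prop
    · obtain ⟨a, rfl⟩ := C2.exists_rep
      have hr : H.Reachable v1.val a.val := ConnectedComponent.eq.mp hF
      exact absurd (keyS _ _ hr v1.prop ▸ v1.prop) a.prop
    · have hr : H.Reachable v1.val v2.val := ConnectedComponent.eq.mp hF
      exact congrArg Sum.inr (Subtype.ext (keyS _ _ hr v1.prop))
  calc Nat.card (T.induce (↑S : Set V)ᶜ).ConnectedComponent + S.card
      = Nat.card ((T.induce (↑S : Set V)ᶜ).ConnectedComponent ⊕ ↥S) := by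
        rw [Nat.card_sum, Nat.card_eq_finsetCard]
    _ ≤ Nat.card H.ConnectedComponent := Nat.card_le_card_of_injective F hinj

lemma aux_count {V : Type*} [Fintype V] (G : SimpleGraph V) (S : Finset V) :
    ∑ v ∈ S, (G.neighborSet v).ncard =
      ({e ∈ G.edgeSet | ∃ v ∈ e, v ∈ S} : Set (Sym2 V)).ncard +
      ({e ∈ G.edgeSet | ∀ v ∈ e, v ∈ S} : Set (Sym2 V)).ncard := by
  classical
  set ES : Set (Sym2 V) := {e ∈ G.edgeSet | ∃ v ∈ e, v ∈ S} with hES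
  have hESfin : ES.Finite := Set.toFinite _
  set EF : Finset (Sym2 V) := hESfin.toFinset with hEF
  have h1 : ∀ v ∈ S, (G.neighborSet v).ncard = (EF.filter (fun e => v ∈ e)).card := by
    intro v hv
    rw [← Nat.card_coe_set_eq, ← Nat.card_congr (G.incidenceSetEquivNeighborSet v),
      Nat.card_coe_set_eq]
    rw [Set.ncard_eq_toFinset_card (G.incidenceSet v) (Set.toFinite _)]
    congr 1
    ext e
    simp only [Set.Finite.mem_toFinset, Finset.mem_filter, mem_incidenceSet]
    constructor
    · rintro ⟨he, hve⟩
      exact ⟨hESfin.mem_toFinset.mpr ⟨he, v, hve, hv⟩, hve⟩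
    · rintro ⟨heEF, hve⟩
      exact ⟨(hESfin.mem_toFinset.mp heEF).1, hve⟩
  have h2 : ∑ v ∈ S, (EF.filter (fun e => v ∈ e)).card
      = ∑ e ∈ EF, (S.filter (fun v => v ∈ e)).card := by
    simp only [Finset.card_filter]
    rw [Finset.sum_comm]
  have h3 : ∀ x y : V, G.Adj x y → (x ∈ S ∨ y ∈ S) →
      (S.filter (fun v => v ∈ s(x,y))).card = 1 + (if ∀ v ∈ s(x,y), v ∈ S then 1 else 0) := by
    intro x y hadj hor
    have hxy := G.ne_of_adj hadj
    by_cases hx : x ∈ S <;> by_cases hy : y ∈ S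
    · have hfil : S.filter (fun v => v ∈ s(x,y)) = {x, y} := by
        ext v
        simp only [Finset.mem_filter, Sym2.mem_iff, Finset.mem_insert, Finset.mem_singleton]
        constructor
        · rintro ⟨-, h⟩; exact h
        · rintro (rfl | rfl) <;> simp [hx, hy]
      rw [hfil, Finset.card_pair hxy, if_pos]
      intro v hv; rw [Sym2.mem_iff] at hv; rcases hv with rfl | rfl <;> assumption
    · have hfil : S.filter (fun v => v ∈ s(x,y)) = {x} := by
        ext v
        simp only [Finset.mem_filter, Sym2.mem_iff, Finset.mem_singleton]
        constructor
        · rintro ⟨hvS, rfl | rfl⟩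
          · rfl
          · exact absurd hvS hy
        · rintro rfl; exact ⟨hx, Or.inl rfl⟩
      rw [hfil, Finset.card_singleton, if_neg]
      intro hall
      exact hy (hall y (Sym2.mem_mk_right x y))
    · have hfil : S.filter (fun v => v ∈ s(x,y)) = {y} := by
        ext v
        simp only [Finset.mem_filter, Sym2.mem_iff, Finset.mem_singleton]
        constructor
        · rintro ⟨hvS, rfl | rfl⟩
          · exact absurd hvS hx
          · rfl
        · rintro rfl; exact ⟨hy, Or.inr rfl⟩
      rw [hfil, Finset.card_singleton, if_neg]
      intro hall
      exact hx (hall x (Sym2.mem_mk_left x y))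
    · tauto
  have h3' : ∀ e ∈ EF, (S.filter (fun v => v ∈ e)).card = 1 + (if ∀ v ∈ e, v ∈ S then 1 else 0) := by
    intro e
    induction e using Sym2.ind with
    | _ x y =>
      intro he
      rw [hESfin.mem_toFinset] at he
      obtain ⟨he1, w, hw, hwS⟩ := he
      have hor : x ∈ S ∨ y ∈ S := by
        rw [Sym2.mem_iff] at hw
        rcases hw with rfl | rfl
        exacts [Or.inl hwS, Or.inr hwS]
      exact h3 x y he1 hor
  have h4 : EF.filter (fun e => ∀ v ∈ e, v ∈ S)
      = (Set.toFinite ({e ∈ G.edgeSet | ∀ v ∈ e, v ∈ S} : Set (Sym2 V))).toFinset := by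
    ext e
    simp only [Finset.mem_filter, Set.Finite.mem_toFinset, hESfin.mem_toFinset]
    constructor
    · rintro ⟨he1, hall⟩; exact ⟨(hESfin.mem_toFinset.mp he1).1, hall⟩
    · rintro ⟨he, hall⟩
      exact ⟨hESfin.mem_toFinset.mpr ⟨he, e.out.1, Sym2.out_fst_mem e, hall _ (Sym2.out_fst_mem e)⟩, hall⟩
  calc ∑ v ∈ S, (G.neighborSet v).ncard
      = ∑ v ∈ S, (EF.filter (fun e => v ∈ e)).card := Finset.sum_congr rfl h1
    _ = ∑ e ∈ EF, (S.filter (fun v => v ∈ e)).card := h2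
    _ = ∑ e ∈ EF, (1 + if ∀ v ∈ e, v ∈ S then 1 else 0) := Finset.sum_congr rfl h3'
    _ = EF.card + (EF.filter (fun e => ∀ v ∈ e, v ∈ S)).card := by
        rw [Finset.sum_add_distrib, Finset.sum_const, smul_eq_mul, mul_one, Finset.card_filter]
    _ = ES.ncard + ({e ∈ G.edgeSet | ∀ v ∈ e, v ∈ S} : Set (Sym2 V)).ncard := by
        rw [h4, ← Set.ncard_eq_toFinset_card, ← Set.ncard_eq_toFinset_card]

lemma aux_disjoint_sum {V : Type*} [Fintype V] {k : ℕ} (G : SimpleGraph V)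
    (T : Fin k → SimpleGraph V) (hsub : ∀ i, T i ≤ G)
    (hdisj : ∀ i j, i ≠ j → Disjoint (T i).edgeSet (T j).edgeSet) (S : Finset V) :
    ∑ i : Fin k, ({e ∈ (T i).edgeSet | ∃ v ∈ e, v ∈ S} : Set (Sym2 V)).ncard ≤
      ({e ∈ G.edgeSet | ∃ v ∈ e, v ∈ S} : Set (Sym2 V)).ncard := by
  classical
  set f : Fin k → Finset (Sym2 V) :=
    fun i => (Set.toFinite ({e ∈ (T i).edgeSet | ∃ v ∈ e, v ∈ S} : Set (Sym2 V))).toFinset with hf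
  have hdisjf : ∀ i ∈ Finset.univ, ∀ j ∈ Finset.univ, i ≠ j → Disjoint (f i) (f j) := by
    intro i _ j _ hij
    rw [Finset.disjoint_left]
    intro e hei hej
    rw [hf, Set.Finite.mem_toFinset] at hei hej
    exact (Set.disjoint_left.mp (hdisj i j hij)) hei.1 hej.1
  have hsum : ∑ i : Fin k, ({e ∈ (T i).edgeSet | ∃ v ∈ e, v ∈ S} : Set (Sym2 V)).ncard
      = (Finset.univ.biUnion f).card := by
    rw [Finset.card_biUnion hdisjf]
    exact Finset.sum_congr rfl fun i _ => Set.ncard_eq_toFinset_card _ _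
  rw [hsum, Set.ncard_eq_toFinset_card ({e ∈ G.edgeSet | ∃ v ∈ e, v ∈ S} : Set (Sym2 V)) (Set.toFinite _)]
  apply Finset.card_le_card
  intro e he
  rw [Finset.mem_biUnion] at he
  obtain ⟨i, -, hei⟩ := he
  rw [hf, Set.Finite.mem_toFinset] at hei
  rw [Set.Finite.mem_toFinset]
  exact ⟨(edgeSet_mono (hsub i)) hei.1, hei.2⟩

/-- If `G` contains `k` edge-disjoint spanning trees, then
`ω(G \ S) ≤ Σ_{v∈S} (d_G(v)/k − 1) + 1 − (1/k)·e_G(S)`. -/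
theorem stmt_4 {V : Type*} [Fintype V] (G : SimpleGraph V) (k : ℕ) (hk : 0 < k)
    (hG : IsTreeConnected k G) (S : Finset V) :
    (numComponents (G.induce (↑S)ᶜ) : ℝ) ≤
      ∑ v ∈ S, ((deg G v : ℝ) / k - 1) + 1 - (edgesIn G (↑S) : ℝ) / k := by
  classical
  obtain ⟨T, hsub, hconn, hdisj⟩ := hG
  set ESG : Set (Sym2 V) := {e ∈ G.edgeSet | ∃ v ∈ e, v ∈ S} with hESG
  set ω : ℕ := numComponents (G.induce (↑S : Set V)ᶜ) with hω
  -- per-tree bound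
  have hstep : ∀ i : Fin k, ω + S.card ≤
      ({e ∈ (T i).edgeSet | ∃ v ∈ e, v ∈ S} : Set (Sym2 V)).ncard + 1 := by
    intro i
    set ESi : Set (Sym2 V) := {e ∈ (T i).edgeSet | ∃ v ∈ e, v ∈ S} with hESi
    have h0 : ω ≤ Nat.card ((T i).induce (↑S : Set V)ᶜ).ConnectedComponent := by
      refine aux_cc_le_of_le ?_
      intro a b h
      exact hsub i h
    have h1 := aux_induce_card (T i) S
    rw [← hESi] at h1
    have h2 := aux_card_cc_deleteEdges (Set.toFinite ESi).toFinset (T i)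
    rw [Set.Finite.coe_toFinset] at h2
    have h3 : Nat.card (T i).ConnectedComponent = 1 := aux_card_cc_connected (hconn i).1
    have h4 : (Set.toFinite ESi).toFinset.card = ESi.ncard :=
      (Set.ncard_eq_toFinset_card _ _).symm
    omega
  -- sum over trees
  have hN : k * (ω + S.card) ≤ ESG.ncard + k := by
    calc k * (ω + S.card) = ∑ _i : Fin k, (ω + S.card) := by
          rw [Finset.sum_const, Finset.card_univ, Fintype.card_fin, smul_eq_mul]
      _ ≤ ∑ i : Fin k, (({e ∈ (T i).edgeSet | ∃ v ∈ e, v ∈ S} : Set (Sym2 V)).ncard + 1) :=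
          Finset.sum_le_sum fun i _ => hstep i
      _ = (∑ i : Fin k, ({e ∈ (T i).edgeSet | ∃ v ∈ e, v ∈ S} : Set (Sym2 V)).ncard) + k := by
          rw [Finset.sum_add_distrib, Finset.sum_const, Finset.card_univ, Fintype.card_fin,
            smul_eq_mul, mul_one]
      _ ≤ ESG.ncard + k := by
          have := aux_disjoint_sum G T hsub hdisj S
          rw [← hESG] at this
          omega
  -- handshake-type counting
  have hC : ∑ v ∈ S, deg G v = ESG.ncard + edgesIn G ↑S := aux_count G S
  -- real arithmetic
  have hk' : (0:ℝ) < k := by exact_mod_cast hk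
  have hNR : (k:ℝ) * ((ω:ℝ) + S.card) ≤ (ESG.ncard : ℝ) + k := by exact_mod_cast hN
  have hCR : (∑ v ∈ S, (deg G v : ℝ)) = (ESG.ncard : ℝ) + (edgesIn G ↑S : ℝ) := by
    exact_mod_cast hC
  rw [Finset.sum_sub_distrib, Finset.sum_const, ← Finset.sum_div, nsmul_eq_mul, mul_one]
  have key : (ω : ℝ) ≤ ((∑ v ∈ S, (deg G v : ℝ)) - (edgesIn G ↑S : ℝ) + k - k * S.card) / k := by
    rw [le_div_iff₀ hk']
    nlinarith [hNR, hCR]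
  refine key.trans (le_of_eq ?_)
  field_simp
  ring
end

section
/- Let H be a minimally m-tree-connected graph (i.e., H contains m edge-disjoint spanning trees and |E(H)| = m(|V(H)|−1)) and let S ⊆ V(H). Then Ω_m(H \ S) = Σ_{v∈S} (d_H(v)/m − 1) + 1 − (1/m)·e_H(S), where for a graph K, Ω_m(K) = |P| − e_K(P)/m with P the partition of V(K) into m-tree-connected components of K and e_K(P) the number of edges of K joining different parts of P. -/
open SimpleGraph

variable {V : Type*}

section Stmt8Aux

variable {V : Type*}

/-! ### Spanning trees of connected graphs -/

private lemma stmt8_reachable_delete {G : SimpleGraph V} {x y : V}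
    (hr : (G \ fromEdgeSet {s(x, y)}).Reachable x y) {u v : V} (h : G.Reachable u v) :
    (G \ fromEdgeSet {s(x, y)}).Reachable u v := by
  obtain ⟨w⟩ := h
  induction w with
  | nil => exact Reachable.refl _
  | cons hadj p ih =>
    rename_i a b c
    refine Reachable.trans ?_ ih
    by_cases he : s(a, b) = s(x, y)
    · rw [Sym2.eq_iff] at he
      rcases he with ⟨rfl, rfl⟩ | ⟨rfl, rfl⟩
      · exact hr
      · exact hr.symm
    · exact Adj.reachable (by
        simp only [sdiff_adj, fromEdgeSet_adj]
        exact ⟨hadj, fun hc => he hc.1⟩)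

private lemma stmt8_exists_spanning_tree_aux [Finite V] (n : ℕ) :
    ∀ G : SimpleGraph V, G.edgeSet.ncard = n → G.Connected → ∃ T ≤ G, T.IsTree := by
  induction n using Nat.strong_induction_on with
  | _ n ih =>
    intro G hn hG
    by_cases hac : G.IsAcyclic
    · exact ⟨G, le_refl _, hG, hac⟩
    · rw [isAcyclic_iff_forall_adj_isBridge] at hac
      push_neg at hac
      obtain ⟨x, y, hadj, hbr⟩ := hac
      rw [isBridge_iff] at hbr
      push_neg at hbr
      have hr : (G \ fromEdgeSet {s(x, y)}).Reachable x y := hbr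
      have hE : (G \ fromEdgeSet {s(x, y)}).edgeSet = G.edgeSet \ {s(x, y)} :=
        edgeSet_deleteEdges _
      have hconn : (G \ fromEdgeSet {s(x, y)}).Connected := by
        haveI := hG.nonempty
        exact ⟨fun u v => stmt8_reachable_delete hr (hG.preconnected u v)⟩
      have hlt : (G \ fromEdgeSet {s(x, y)}).edgeSet.ncard < n := by
        rw [hE, ← hn]
        exact Set.ncard_diff_singleton_lt_of_mem ((G.mem_edgeSet).2 hadj) (G.edgeSet.toFinite)
      obtain ⟨T, hT1, hT2⟩ := ih _ hlt _ rfl hconn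
      exact ⟨T, hT1.trans sdiff_le, hT2⟩

private lemma stmt8_exists_spanning_tree [Finite V] {G : SimpleGraph V} (hG : G.Connected) :
    ∃ T ≤ G, T.IsTree :=
  stmt8_exists_spanning_tree_aux _ G rfl hG

/-! ### Edge bound for acyclic graphs -/

private lemma stmt8_acyclic_sup_edge {G : SimpleGraph V} {x y : V} (hxy : x ≠ y)
    (hnr : ¬ G.Reachable x y) (hac : G.IsAcyclic) : (G ⊔ edge x y).IsAcyclic := by
  intro u p hp
  by_cases he : s(x, y) ∈ p.edges
  · have : (G ⊔ edge x y).Adj x y ∧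
        ((G ⊔ edge x y) \ fromEdgeSet {s(x, y)}).Reachable x y :=
      adj_and_reachable_delete_edges_iff_exists_cycle.2 ⟨u, p, hp, he⟩
    refine hnr (this.2.mono ?_)
    intro a b hab
    simp only [sdiff_adj, fromEdgeSet_adj, sup_adj, edge_adj] at hab
    obtain ⟨h1 | h1, h2⟩ := hab
    · exact h1
    · exfalso
      rcases h1 with ⟨⟨rfl, rfl⟩ | ⟨rfl, rfl⟩, hne⟩
      · exact h2 ⟨rfl, hne⟩
      · exact h2 ⟨Sym2.eq_swap, hne⟩
  · have hsub : ∀ e ∈ p.edges, e ∈ G.edgeSet := by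
      intro e hep
      have := p.edges_subset_edgeSet hep
      rw [edgeSet_sup, edge_edgeSet_of_ne hxy] at this
      rcases this with h | h
      · exact h
      · exact absurd (Set.mem_singleton_iff.1 h ▸ hep) he
    exact hac (p.transfer G hsub) (hp.transfer hsub)

private lemma stmt8_cc_card_lt [Finite V] {G : SimpleGraph V} {x y : V}
    (hnr : ¬ G.Reachable x y) :
    Nat.card (G ⊔ edge x y).ConnectedComponent < Nat.card G.ConnectedComponent := by
  have := Fintype.ofFinite V
  have := Fintype.ofFinite G.ConnectedComponent
  have := Fintype.ofFinite (G ⊔ edge x y).ConnectedComponent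
  rw [Nat.card_eq_fintype_card, Nat.card_eq_fintype_card]
  apply Fintype.card_lt_of_surjective_not_injective
      (ConnectedComponent.map (Hom.ofLE le_sup_left))
  · intro c
    refine c.ind fun v => ⟨G.connectedComponentMk v, ?_⟩
    rfl
  · intro hinj
    have hxy : x ≠ y := fun h => hnr (h ▸ Reachable.refl x)
    have : (G ⊔ edge x y).connectedComponentMk x = (G ⊔ edge x y).connectedComponentMk y :=
      ConnectedComponent.sound (Adj.reachable (by simp [edge_adj, hxy]))
    have h2 := hinj (a₁ := G.connectedComponentMk x) (a₂ := G.connectedComponentMk y) this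
    exact hnr (ConnectedComponent.exact h2)

private lemma stmt8_acyclic_ncard_aux [Finite V] [Nonempty V] (k : ℕ) :
    ∀ G : SimpleGraph V, Nat.card G.ConnectedComponent = k → G.IsAcyclic →
      G.edgeSet.ncard + 1 ≤ Nat.card V := by
  have := Fintype.ofFinite V
  induction k using Nat.strong_induction_on with
  | _ k ih =>
    intro G hk hac
    by_cases hp : G.Preconnected
    · have htree : G.IsTree := ⟨⟨hp⟩, hac⟩
      classical
      have := htree.card_edgeFinset
      rw [Set.ncard_eq_toFinset_card' G.edgeSet]
      rw [Nat.card_eq_fintype_card]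
      have h1 : 1 ≤ Fintype.card V := Fintype.card_pos
      rw [show G.edgeSet.toFinset = G.edgeFinset from rfl]
      omega
    · simp only [Preconnected, not_forall] at hp
      obtain ⟨x, y, hnr⟩ := hp
      have hxy : x ≠ y := fun h => hnr (h ▸ Reachable.refl x)
      have hlt := stmt8_cc_card_lt (G := G) hnr
      have hac' := stmt8_acyclic_sup_edge hxy hnr hac
      have hE : (G ⊔ edge x y).edgeSet = insert s(x, y) G.edgeSet := by
        rw [edgeSet_sup, edge_edgeSet_of_ne hxy]
        exact Set.union_singleton
      have hcard := ih _ (hk ▸ hlt) _ rfl hac'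
      rw [hE] at hcard
      have hins : (insert s(x, y) G.edgeSet).ncard = G.edgeSet.ncard + 1 :=
        Set.ncard_insert_of_notMem (fun hc => hnr (Adj.reachable hc)) G.edgeSet.toFinite
      omega

private lemma stmt8_acyclic_ncard_le [Finite V] [Nonempty V] {G : SimpleGraph V}
    (hac : G.IsAcyclic) : G.edgeSet.ncard + 1 ≤ Nat.card V :=
  stmt8_acyclic_ncard_aux _ G rfl hac

/-! ### Counting translation between induced subgraphs and ambient graphs -/

private lemma stmt8_setOf_inside_image (G : SimpleGraph V) (A : Set V) (C : Set A) :
    Sym2.map (Subtype.val : A → V) '' {e ∈ (G.induce A).edgeSet | ∀ v ∈ e, v ∈ C}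
      = {e ∈ G.edgeSet | ∀ v ∈ e, v ∈ Subtype.val '' C} := by
  ext e
  constructor
  · rintro ⟨e', ⟨he', hC⟩, rfl⟩
    induction e' with
    | _ a b =>
      refine ⟨he', ?_⟩
      intro v hv
      rw [Sym2.map_pair_eq, Sym2.mem_iff] at hv
      rcases hv with rfl | rfl
      · exact ⟨a, hC a (Sym2.mem_mk_left a b), rfl⟩
      · exact ⟨b, hC b (Sym2.mem_mk_right a b), rfl⟩
  · intro he
    induction e with
    | _ x y =>
      obtain ⟨he, hm⟩ := he
      obtain ⟨a, ha, rfl⟩ := hm x (Sym2.mem_mk_left x y)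
      obtain ⟨b, hb, rfl⟩ := hm y (Sym2.mem_mk_right _ _)
      refine ⟨s(a, b), ⟨he, ?_⟩, Sym2.map_pair_eq ..⟩
      intro v hv
      rw [Sym2.mem_iff] at hv
      rcases hv with rfl | rfl
      · exact ha
      · exact hb

private lemma stmt8_ncard_inside_induce (G : SimpleGraph V) (A : Set V) (C : Set A) :
    {e ∈ (G.induce A).edgeSet | ∀ v ∈ e, v ∈ C}.ncard
      = {e ∈ G.edgeSet | ∀ v ∈ e, v ∈ Subtype.val '' C}.ncard := by
  rw [← stmt8_setOf_inside_image G A C]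
  exact (Set.ncard_image_of_injective _ (Sym2.map.injective Subtype.val_injective)).symm

private lemma stmt8_edgeSet_eq_inside_univ (G : SimpleGraph V) :
    G.edgeSet = {e ∈ G.edgeSet | ∀ v ∈ e, v ∈ (Set.univ : Set V)} := by
  ext e; simp

private lemma stmt8_ncard_iUnion_le {α ι : Type*} [Fintype ι] (f : ι → Set α)
    (hf : ∀ i, (f i).Finite) : (⋃ i, f i).ncard ≤ ∑ i, (f i).ncard := by
  classical
  have heq : (⋃ i, f i) = ↑(Finset.univ.biUnion fun i => (hf i).toFinset) := by
    ext x
    simp [Set.Finite.mem_toFinset]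
  rw [heq, Set.ncard_coe_finset]
  refine (Finset.card_biUnion_le).trans ?_
  refine Finset.sum_le_sum fun i _ => ?_
  rw [← Set.ncard_coe_finset ((hf i).toFinset)]
  simp

/-! ### Tree-connectivity: basic machinery -/

/-- Ambient formulation of tree-connectivity of an induced subgraph. -/
private def Stmt8AuxTC (m : ℕ) (G : SimpleGraph V) (A : Set V) : Prop :=
  ∃ T : Fin m → SimpleGraph V,
    (∀ i, T i ≤ G) ∧ (∀ i x y, (T i).Adj x y → x ∈ A ∧ y ∈ A) ∧
    (∀ i, ∀ x ∈ A, ∀ y ∈ A, (T i).Reachable x y) ∧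
    ∀ i j, i ≠ j → Disjoint (T i).edgeSet (T j).edgeSet

private lemma IsTreeConnected.stmt8_auxTC {m : ℕ} {G : SimpleGraph V} {A : Set V}
    (h : IsTreeConnected m (G.induce A)) : Stmt8AuxTC m G A := by
  obtain ⟨T, hle, hct, hdisj⟩ := h
  refine ⟨fun i => (T i).spanningCoe, ?_, ?_, ?_, ?_⟩
  · intro i x y hxy
    simp only [map_adj, Function.Embedding.coe_subtype] at hxy
    obtain ⟨a, b, hab, rfl, rfl⟩ := hxy
    exact hle i hab
  · intro i x y hxy
    simp only [map_adj, Function.Embedding.coe_subtype] at hxy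
    obtain ⟨a, b, _, rfl, rfl⟩ := hxy
    exact ⟨a.2, b.2⟩
  · intro i x hx y hy
    have := ((hct i).1.preconnected ⟨x, hx⟩ ⟨y, hy⟩).map (Embedding.spanningCoe (T i)).toHom
    exact this
  · intro i j hij
    rw [Set.disjoint_left]
    intro e hei hej
    induction e with
    | _ x y =>
      rw [mem_edgeSet] at hei hej
      simp only [map_adj, Function.Embedding.coe_subtype] at hei hej
      obtain ⟨a, b, hab, rfl, rfl⟩ := hei
      obtain ⟨a', b', hab', ha', hb'⟩ := hej
      rw [Subtype.val_injective.eq_iff] at ha' hb'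
      subst ha'; subst hb'
      exact Set.disjoint_left.1 (hdisj i j hij) ((mem_edgeSet _).2 hab) ((mem_edgeSet _).2 hab')

private lemma stmt8_reachable_induce_of_mem {T : SimpleGraph V} {A : Set V}
    (hT : ∀ x y, T.Adj x y → x ∈ A ∧ y ∈ A) {u v : V} (w : T.Walk u v)
    (hu : u ∈ A) (hv : v ∈ A) : (T.induce A).Reachable ⟨u, hu⟩ ⟨v, hv⟩ := by
  induction w with
  | nil => exact Reachable.refl _
  | cons h p ih =>
    rename_i a b c
    have hb : b ∈ A := (hT _ _ h).2
    exact (Adj.reachable (by exact h : (T.induce A).Adj ⟨a, hu⟩ ⟨b, hb⟩)).trans (ih hb hv)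

private lemma Stmt8AuxTC.isTreeConnected [Finite V] {m : ℕ} {G : SimpleGraph V} {A : Set V}
    (hA : A.Nonempty) (h : Stmt8AuxTC m G A) : IsTreeConnected m (G.induce A) := by
  obtain ⟨T, hle, hmem, hreach, hdisj⟩ := h
  have hconn : ∀ i, ((T i).induce A).Connected := by
    intro i
    haveI : Nonempty A := ⟨⟨hA.choose, hA.choose_spec⟩⟩
    refine ⟨fun a b => ?_⟩
    obtain ⟨w⟩ := hreach i a a.2 b b.2
    have := stmt8_reachable_induce_of_mem (hmem i) w a.2 b.2
    simpa using this
  have hst : ∀ i, ∃ T' ≤ (T i).induce A, T'.IsTree := fun i =>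
    stmt8_exists_spanning_tree (hconn i)
  choose T' hle' htree using hst
  refine ⟨T', ?_, ?_, ?_⟩
  · intro i a b hab
    exact hle i (hle' i hab)
  · exact fun i => ⟨(htree i).isConnected, (htree i).IsAcyclic⟩
  · intro i j hij
    rw [Set.disjoint_left]
    intro e hei hej
    induction e with
    | _ a b =>
      rw [mem_edgeSet] at hei hej
      have h1 : (T i).Adj ↑a ↑b := hle' i hei
      have h2 : (T j).Adj ↑a ↑b := hle' j hej
      exact Set.disjoint_left.1 (hdisj i j hij) ((mem_edgeSet _).2 h1) ((mem_edgeSet _).2 h2)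

private lemma Stmt8AuxTC.union {m : ℕ} {G : SimpleGraph V} {A B : Set V}
    (hAB : (A ∩ B).Nonempty) (hA : Stmt8AuxTC m G A) (hB : Stmt8AuxTC m G B) :
    Stmt8AuxTC m G (A ∪ B) := by
  obtain ⟨u0, hu0A, hu0B⟩ := hAB
  obtain ⟨T, hle, hmem, hreach, hdisj⟩ := hA
  obtain ⟨T', hle', hmem', hreach', hdisj'⟩ := hB
  classical
  let R : Fin m → SimpleGraph V := fun i =>
    { Adj := fun x y => (T' i).Adj x y ∧ ¬(x ∈ A ∧ y ∈ A)
      symm := by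
        constructor
        rintro x y ⟨h1, h2⟩
        exact ⟨h1.symm, fun hc => h2 ⟨hc.2, hc.1⟩⟩
      loopless := ⟨fun x h => (T' i).irrefl h.1⟩ }
  refine ⟨fun i => T i ⊔ R i, ?_, ?_, ?_, ?_⟩
  · intro i
    refine sup_le (hle i) ?_
    intro x y h
    exact hle' i h.1
  · rintro i x y (h | h)
    · obtain ⟨h1, h2⟩ := hmem i x y h
      exact ⟨Or.inl h1, Or.inl h2⟩
    · obtain ⟨h1, h2⟩ := hmem' i x y h.1
      exact ⟨Or.inr h1, Or.inr h2⟩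
  · have walkkey : ∀ (i : Fin m) (a c : V) (w : (T' i).Walk a c), c ∈ A →
        (T i ⊔ R i).Reachable a c := by
      intro i a c w
      induction w with
      | nil => exact fun _ => Reachable.refl _
      | cons hadj p ih =>
        rename_i a b c
        intro hcA
        by_cases hab : a ∈ A ∧ b ∈ A
        · exact (hreach i a hab.1 c hcA).mono le_sup_left
        · exact (Adj.reachable (Or.inr ⟨hadj, hab⟩ : (T i ⊔ R i).Adj a b)).trans (ih hcA)
    have key : ∀ i, ∀ z ∈ A ∪ B, (T i ⊔ R i).Reachable z u0 := by
      intro i z hz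
      rcases hz with hz | hz
      · exact (hreach i z hz u0 hu0A).mono le_sup_left
      · obtain ⟨w⟩ := hreach' i z hz u0 hu0B
        exact walkkey i z u0 w hu0A
    intro i x hx y hy
    exact (key i x hx).trans (key i y hy).symm
  · intro i j hij
    rw [Set.disjoint_left]
    intro e hei hej
    induction e with
    | _ x y =>
      rw [mem_edgeSet] at hei hej
      rcases hei with h1 | h1 <;> rcases hej with h2 | h2
      · exact Set.disjoint_left.1 (hdisj i j hij) ((mem_edgeSet _).2 h1) ((mem_edgeSet _).2 h2)
      · exact h2.2 (hmem i x y h1)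
      · exact h1.2 (hmem j x y h2)
      · exact Set.disjoint_left.1 (hdisj' i j hij) ((mem_edgeSet _).2 h1.1) ((mem_edgeSet _).2 h2.1)

private lemma stmt8_singleton_isTreeConnected (m : ℕ) (G : SimpleGraph V) (u : V) :
    IsTreeConnected m (G.induce {u}) := by
  refine ⟨fun _ => ⊥, fun _ => bot_le, ?_, ?_⟩
  · intro i
    refine ⟨⟨fun a b => ?_⟩, isAcyclic_bot⟩
    have : a = b := Subtype.ext (a.2.trans b.2.symm)
    exact this ▸ Reachable.refl _
  · intro i j _
    simp

private lemma stmt8_sameTC_refl (m : ℕ) (G : SimpleGraph V) (u : V) : sameTC m G u u :=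
  ⟨{u}, rfl, rfl, stmt8_singleton_isTreeConnected m G u⟩

private lemma stmt8_sameTC_symm {m : ℕ} {G : SimpleGraph V} {u v : V} (h : sameTC m G u v) :
    sameTC m G v u := by
  obtain ⟨W, h1, h2, h3⟩ := h
  exact ⟨W, h2, h1, h3⟩

private lemma stmt8_sameTC_trans [Finite V] {m : ℕ} {G : SimpleGraph V} {u v w : V}
    (h1 : sameTC m G u v) (h2 : sameTC m G v w) : sameTC m G u w := by
  obtain ⟨W1, hu, hv1, htc1⟩ := h1
  obtain ⟨W2, hv2, hw, htc2⟩ := h2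
  refine ⟨W1 ∪ W2, Or.inl hu, Or.inr hw, ?_⟩
  exact (Stmt8AuxTC.union ⟨v, hv1, hv2⟩ htc1.stmt8_auxTC htc2.stmt8_auxTC).isTreeConnected
    ⟨u, Or.inl hu⟩

/-- The `sameTC`-class of `u` induces an `m`-tree-connected subgraph. -/
private lemma stmt8_class_isTreeConnected [Finite V] (m : ℕ) (G : SimpleGraph V) (u : V) :
    IsTreeConnected m (G.induce {v | sameTC m G u v}) := by
  classical
  set C := {v | sameTC m G u v} with hC
  have huC : u ∈ C := stmt8_sameTC_refl m G u
  have key : ∀ F : Finset V, ↑F ⊆ C →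
      ∃ D : Set V, ↑F ⊆ D ∧ D ⊆ C ∧ u ∈ D ∧ Stmt8AuxTC m G D := by
    intro F
    induction F using Finset.induction_on with
    | empty =>
      intro _
      refine ⟨{u}, by simp, by simpa using huC, rfl, ?_⟩
      exact (stmt8_singleton_isTreeConnected m G u).stmt8_auxTC
    | insert v F' hx ih =>
      intro hsub
      have hvC : v ∈ C := hsub (Finset.mem_insert_self v F')
      obtain ⟨D, hFD, hDC, huD, haux⟩ := ih (fun z hz => hsub (Finset.mem_insert_of_mem hz))
      obtain ⟨W, huW, hvW, htcW⟩ := hvC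
      have hWC : W ⊆ C := fun z hz => ⟨W, huW, hz, htcW⟩
      refine ⟨D ∪ W, ?_, Set.union_subset hDC hWC, Or.inl huD, ?_⟩
      · intro z hz
        rcases Finset.mem_insert.1 hz with rfl | hz
        · exact Or.inr hvW
        · exact Or.inl (hFD hz)
      · exact Stmt8AuxTC.union ⟨u, huD, huW⟩ haux htcW.stmt8_auxTC
  obtain ⟨D, hFD, hDC, huD, haux⟩ := key (Set.toFinite C).toFinset (by simp)
  have hDeq : D = C := le_antisymm hDC (by simpa using hFD)
  exact hDeq ▸ haux.isTreeConnected ⟨u, huD⟩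

/-! ### Edge-count bounds -/

private lemma stmt8_tc_ncard_lower [Finite V] {m : ℕ} {G : SimpleGraph V}
    (h : IsTreeConnected m G) : m * Nat.card V ≤ G.edgeSet.ncard + m := by
  rcases Nat.eq_zero_or_pos m with rfl | hm
  · simp
  obtain ⟨T, hle, hct, hdisj⟩ := h
  haveI : Nonempty V := ((hct ⟨0, hm⟩).1).nonempty
  classical
  haveI := Fintype.ofFinite V
  have htree : ∀ i, (T i).IsTree := fun i => ⟨(hct i).1, (hct i).2⟩
  have hcard : ∀ i, (T i).edgeFinset.card + 1 = Fintype.card V := fun i =>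
    (htree i).card_edgeFinset
  have hdisjF : ∀ i j : Fin m, i ≠ j → Disjoint (T i).edgeFinset (T j).edgeFinset := by
    intro i j hij
    rw [Finset.disjoint_left]
    intro e hei hej
    rw [mem_edgeFinset] at hei hej
    exact Set.disjoint_left.1 (hdisj i j hij) hei hej
  have hsub : (Finset.univ : Finset (Fin m)).biUnion (fun i => (T i).edgeFinset)
      ⊆ G.edgeFinset := by
    intro e he
    rw [Finset.mem_biUnion] at he
    obtain ⟨i, _, he⟩ := he
    rw [mem_edgeFinset] at he ⊢
    exact (edgeSet_subset_edgeSet.2 (hle i)) he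
  have hbi := Finset.card_biUnion (fun i _ => fun j _ hij => hdisjF i j hij)
    (s := Finset.univ) (t := fun i => (T i).edgeFinset)
  have hge := Finset.card_le_card hsub
  rw [hbi] at hge
  have hsum : ∑ i : Fin m, ((T i).edgeFinset.card + 1) = m * Fintype.card V := by
    rw [Finset.sum_congr rfl (fun i _ => hcard i)]
    simp [mul_comm]
  rw [Finset.sum_add_distrib] at hsum
  simp only [Finset.sum_const, Finset.card_univ, Fintype.card_fin, smul_eq_mul, mul_one] at hsum
  have hE : G.edgeSet.ncard = G.edgeFinset.card := Set.ncard_eq_toFinset_card' _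
  rw [Nat.card_eq_fintype_card, hE]
  have hge' : ∑ i : Fin m, (T i).edgeFinset.card ≤ G.edgeFinset.card := hge
  omega

private lemma stmt8_isAcyclic_induce {G : SimpleGraph V} (hac : G.IsAcyclic) (A : Set V) :
    (G.induce A).IsAcyclic := by
  intro v c hc
  exact hac (c.map (Embedding.induce (G := G) A).toHom)
    (hc.map (Embedding.induce (G := G) A).injective)

private lemma stmt8_decomp_inside_upper [Finite V] {m : ℕ} {H : SimpleGraph V}
    {T : Fin m → SimpleGraph V} (hle : ∀ i, T i ≤ H) (hac : ∀ i, (T i).IsAcyclic)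
    (hcover : ∀ e ∈ H.edgeSet, ∃ i, e ∈ (T i).edgeSet)
    {A : Set V} (hA : A.Nonempty) :
    {e ∈ H.edgeSet | ∀ v ∈ e, v ∈ A}.ncard + m ≤ m * A.ncard := by
  classical
  haveI := Fintype.ofFinite V
  haveI : Nonempty A := ⟨⟨hA.choose, hA.choose_spec⟩⟩
  obtain ⟨n, hn⟩ : ∃ n, A.ncard = n + 1 := ⟨A.ncard - 1, by
    have : 0 < A.ncard := (Set.ncard_pos A.toFinite).2 hA
    omega⟩
  have key : ∀ i, {e ∈ (T i).edgeSet | ∀ v ∈ e, v ∈ A}.ncard ≤ n := by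
    intro i
    have h1 : ((T i).induce A).edgeSet.ncard + 1 ≤ Nat.card A :=
      stmt8_acyclic_ncard_le (stmt8_isAcyclic_induce (hac i) A)
    rw [Nat.card_coe_set_eq, hn] at h1
    have h2 := stmt8_ncard_inside_induce (T i) A Set.univ
    rw [Subtype.coe_image_univ] at h2
    rw [← stmt8_edgeSet_eq_inside_univ] at h2
    omega
  have hsub : {e ∈ H.edgeSet | ∀ v ∈ e, v ∈ A} ⊆
      ⋃ i, {e ∈ (T i).edgeSet | ∀ v ∈ e, v ∈ A} := by
    rintro e ⟨he, hm2⟩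
    obtain ⟨i, hi⟩ := hcover e he
    exact Set.mem_iUnion.2 ⟨i, hi, hm2⟩
  have hcount : {e ∈ H.edgeSet | ∀ v ∈ e, v ∈ A}.ncard ≤ m * n := by
    calc {e ∈ H.edgeSet | ∀ v ∈ e, v ∈ A}.ncard
        ≤ (⋃ i, {e ∈ (T i).edgeSet | ∀ v ∈ e, v ∈ A}).ncard :=
          Set.ncard_le_ncard hsub (Set.toFinite _)
      _ ≤ ∑ i : Fin m, {e ∈ (T i).edgeSet | ∀ v ∈ e, v ∈ A}.ncard :=
          stmt8_ncard_iUnion_le _ (fun i => Set.toFinite _)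
      _ ≤ ∑ _i : Fin m, n := Finset.sum_le_sum (fun i _ => key i)
      _ = m * n := by simp [Finset.sum_const, mul_comm]
  rw [hn]
  calc {e ∈ H.edgeSet | ∀ v ∈ e, v ∈ A}.ncard + m ≤ m * n + m := by omega
  _ = m * (n + 1) := by ring

/-! ### Handshake counting -/

private lemma stmt8_ncard_incident (H : SimpleGraph V) (u : V) (P : V → Prop) (hPu : P u) :
    {e ∈ H.edgeSet | u ∈ e ∧ ∀ v ∈ e, P v}.ncard = {w | H.Adj u w ∧ P w}.ncard := by
  have hinj : Set.InjOn (fun w => s(u, w)) {w | H.Adj u w ∧ P w} := by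
    intro w hw w' hw' he
    simp only [Sym2.eq_iff] at he
    rcases he with ⟨-, h⟩ | ⟨h1, h2⟩
    · exact h
    · exact absurd h2.symm hw.1.ne
  rw [← Set.ncard_image_of_injOn hinj]
  congr 1
  ext e
  constructor
  · rintro ⟨he, hue, hall⟩
    induction e with
    | _ x y =>
      rcases Sym2.mem_iff.1 hue with h | h
      · subst h
        exact ⟨y, ⟨(mem_edgeSet _).1 he, hall y (Sym2.mem_mk_right u y)⟩, rfl⟩
      · subst h
        exact ⟨x, ⟨((mem_edgeSet _).1 he).symm, hall x (Sym2.mem_mk_left x u)⟩, Sym2.eq_swap⟩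
  · rintro ⟨w, ⟨hadj, hPw⟩, rfl⟩
    refine ⟨(mem_edgeSet _).2 hadj, Sym2.mem_mk_left u w, ?_⟩
    intro v hv
    rcases Sym2.mem_iff.1 hv with rfl | rfl
    · exact hPu
    · exact hPw

private lemma stmt8_handshake [Finite V] (H : SimpleGraph V) (S : Finset V) :
    ∑ v ∈ S, (H.neighborSet v).ncard
        + {e ∈ H.edgeSet | ∀ v ∈ e, v ∈ ((↑S : Set V))ᶜ}.ncard
      = H.edgeSet.ncard + {e ∈ H.edgeSet | ∀ v ∈ e, v ∈ (↑S : Set V)}.ncard := by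
  classical
  induction S using Finset.induction_on with
  | empty =>
    have h1 : {e ∈ H.edgeSet | ∀ v ∈ e, v ∈ ((↑(∅ : Finset V) : Set V))ᶜ} = H.edgeSet := by
      ext e; simp
    have h2 : {e ∈ H.edgeSet | ∀ v ∈ e, v ∈ (↑(∅ : Finset V) : Set V)} = ∅ := by
      ext e
      induction e with
      | _ x y =>
        simp only [Set.mem_setOf_eq, Set.mem_empty_iff_false, iff_false, not_and]
        intro he hall
        simpa using hall x (Sym2.mem_mk_left x y)
    rw [h1, h2]
    simp
  | insert u S hu ih =>
    have hsplit_out : {e ∈ H.edgeSet | ∀ v ∈ e, v ∈ ((↑S : Set V))ᶜ}.ncard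
        = {e ∈ H.edgeSet | ∀ v ∈ e, v ∈ ((↑(insert u S) : Set V))ᶜ}.ncard
          + {w | H.Adj u w ∧ w ∈ ((↑S : Set V))ᶜ}.ncard := by
      rw [← stmt8_ncard_incident H u (fun v => v ∈ ((↑S : Set V))ᶜ) (by simp [hu])]
      rw [← Set.ncard_union_eq ?disj (Set.toFinite _) (Set.toFinite _)]
      case disj =>
        rw [Set.disjoint_left]
        rintro e ⟨-, hall⟩ ⟨-, hue, -⟩
        have := hall u hue
        simp at this
      congr 1
      ext e
      simp only [Set.mem_setOf_eq, Set.mem_union, Finset.coe_insert, Set.mem_compl_iff,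
        Set.mem_insert_iff, Finset.mem_coe]
      constructor
      · rintro ⟨he, hall⟩
        by_cases hue : u ∈ e
        · exact Or.inr ⟨he, hue, fun v hv => hall v hv⟩
        · refine Or.inl ⟨he, fun v hv => ?_⟩
          push_neg
          exact ⟨fun h => hue (h ▸ hv), hall v hv⟩
      · rintro (⟨he, hall⟩ | ⟨he, hue, hall⟩)
        · refine ⟨he, fun v hv => ?_⟩
          have := hall v hv
          push_neg at this
          exact this.2
        · exact ⟨he, hall⟩
    have hsplit_in : {e ∈ H.edgeSet | ∀ v ∈ e, v ∈ (↑(insert u S) : Set V)}.ncard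
        = {e ∈ H.edgeSet | ∀ v ∈ e, v ∈ (↑S : Set V)}.ncard
          + {w | H.Adj u w ∧ w ∈ (↑S : Set V)}.ncard := by
      have h2 : {w | H.Adj u w ∧ w ∈ (↑S : Set V)}
          = {w | H.Adj u w ∧ w ∈ (↑(insert u S) : Set V)} := by
        ext w
        simp only [Set.mem_setOf_eq, Finset.coe_insert, Set.mem_insert_iff, Finset.mem_coe]
        exact ⟨fun ⟨h1, h2⟩ => ⟨h1, Or.inr h2⟩,
          fun ⟨h1, h2⟩ => ⟨h1, h2.resolve_left (fun hh => h1.ne hh.symm)⟩⟩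
      rw [h2, ← stmt8_ncard_incident H u (fun v => v ∈ (↑(insert u S) : Set V)) (by simp)]
      rw [← Set.ncard_union_eq ?disj2 (Set.toFinite _) (Set.toFinite _)]
      case disj2 =>
        rw [Set.disjoint_left]
        rintro e ⟨-, hall⟩ ⟨-, hue, -⟩
        exact hu (hall u hue)
      congr 1
      ext e
      simp only [Set.mem_setOf_eq, Set.mem_union, Finset.coe_insert, Set.mem_insert_iff,
        Finset.mem_coe]
      constructor
      · rintro ⟨he, hall⟩
        by_cases hue : u ∈ e
        · exact Or.inr ⟨he, hue, fun v hv => hall v hv⟩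
        · refine Or.inl ⟨he, fun v hv => ?_⟩
          rcases hall v hv with h | h
          · exact absurd (h ▸ hv) hue
          · exact h
      · rintro (⟨he, hall⟩ | ⟨he, hue, hall⟩)
        · exact ⟨he, fun v hv => Or.inr (hall v hv)⟩
        · exact ⟨he, hall⟩
    have hdeg : (H.neighborSet u).ncard
        = {w | H.Adj u w ∧ w ∈ (↑S : Set V)}.ncard
          + {w | H.Adj u w ∧ w ∈ ((↑S : Set V))ᶜ}.ncard := by
      rw [← Set.ncard_union_eq ?disj3 (Set.toFinite _) (Set.toFinite _)]
      case disj3 =>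
        rw [Set.disjoint_left]
        rintro w ⟨-, h1⟩ ⟨-, h2⟩
        exact h2 h1
      congr 1
      ext w
      constructor
      · intro hw
        by_cases hwS : w ∈ (↑S : Set V)
        · exact Or.inl ⟨hw, hwS⟩
        · exact Or.inr ⟨hw, hwS⟩
      · rintro (⟨h, -⟩ | ⟨h, -⟩) <;> exact h
    rw [Finset.sum_insert hu, hdeg, hsplit_in]
    omega

/-! ### Master counting identity -/

private lemma stmt8_omega_count {X : Type*} [Finite X] (m : ℕ) (K : SimpleGraph X)
    (hup : ∀ C : Set X, C.Nonempty →
      {e ∈ K.edgeSet | ∀ v ∈ e, v ∈ C}.ncard + m ≤ m * C.ncard) :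
    m * Nat.card (Quot (sameTC m K)) + K.edgeSet.ncard
      = m * Nat.card X
        + {e ∈ K.edgeSet | ∃ x y, e = s(x, y) ∧ ¬ sameTC m K x y}.ncard := by
  classical
  have hequiv : Equivalence (sameTC m K) :=
    ⟨stmt8_sameTC_refl m K, stmt8_sameTC_symm, stmt8_sameTC_trans⟩
  have hmkeq : ∀ a b : X,
      Quot.mk (sameTC m K) a = Quot.mk (sameTC m K) b ↔ sameTC m K a b := by
    intro a b
    constructor
    · intro h
      exact (hequiv.eqvGen_iff).1 (Quot.eqvGen_exact h)
    · exact Quot.sound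
  haveI := Fintype.ofFinite X
  haveI := Fintype.ofFinite (Quot (sameTC m K))
  set φ : X → Quot (sameTC m K) := Quot.mk (sameTC m K) with hφ
  have h_class : ∀ u : X,
      {e ∈ K.edgeSet | ∀ v ∈ e, v ∈ {v | sameTC m K u v}}.ncard + m
        = m * {v | sameTC m K u v}.ncard := by
    intro u
    have hCne : {v | sameTC m K u v}.Nonempty := ⟨u, hequiv.refl u⟩
    have hlow := stmt8_tc_ncard_lower (stmt8_class_isTreeConnected m K u)
    have htrans := stmt8_ncard_inside_induce K {v | sameTC m K u v} Set.univ
    rw [Subtype.coe_image_univ, ← stmt8_edgeSet_eq_inside_univ] at htrans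
    rw [Nat.card_coe_set_eq] at hlow
    have hupC := hup {v | sameTC m K u v} hCne
    omega
  have hvert : Fintype.card X
      = ∑ q : Quot (sameTC m K), (Finset.univ.filter (fun v => φ v = q)).card := by
    rw [← Finset.card_univ]
    exact Finset.card_eq_sum_card_fiberwise (fun v _ => Finset.mem_univ (φ v))
  set crossP : Sym2 X → Prop := fun e => ∃ x y, e = s(x, y) ∧ ¬ sameTC m K x y with hcrossP
  have hsplit : (K.edgeFinset.filter crossP).card
      + (K.edgeFinset.filter (fun e => ¬ crossP e)).card = K.edgeFinset.card :=
    Finset.card_filter_add_card_filter_not _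
  set g : Sym2 X → Quot (sameTC m K) := fun e => φ (Quot.out e).1 with hg
  have hwithin : (K.edgeFinset.filter (fun e => ¬ crossP e)).card
      = ∑ q : Quot (sameTC m K),
          (K.edgeFinset.filter (fun e => ∀ v ∈ e, φ v = q)).card := by
    rw [Finset.card_eq_sum_card_fiberwise
      (f := g) (fun e _ => Finset.mem_univ (g e))]
    refine Finset.sum_congr rfl fun q _ => ?_
    congr 1
    ext e
    simp only [Finset.mem_filter, mem_edgeFinset]
    constructor
    · rintro ⟨⟨he, hcr⟩, hgq⟩
      refine ⟨he, ?_⟩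
      simp only [hcrossP] at hcr
      push_neg at hcr
      intro v hv
      have hout1 : (Quot.out e).1 ∈ e := Sym2.out_fst_mem e
      have hout : e = s((Quot.out e).1, (Quot.out e).2) := by
        rw [Sym2.mk, Quot.out_eq]
      have hrel : sameTC m K (Quot.out e).1 (Quot.out e).2 :=
        hcr (Quot.out e).1 (Quot.out e).2 hout
      rw [hout, Sym2.mem_iff] at hv
      rcases hv with rfl | rfl
      · exact hgq
      · rw [← hgq]
        exact (Quot.sound (hequiv.symm hrel))
    · rintro ⟨he, hall⟩
      have hout1 : (Quot.out e).1 ∈ e := Sym2.out_fst_mem e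
      have hout : e = s((Quot.out e).1, (Quot.out e).2) := by
        rw [Sym2.mk, Quot.out_eq]
      refine ⟨⟨he, ?_⟩, hall _ hout1⟩
      rintro ⟨x, y, rfl, hnr⟩
      have hx : x ∈ s(x, y) := Sym2.mem_mk_left x y
      have hy : y ∈ s(x, y) := Sym2.mem_mk_right x y
      exact hnr ((hmkeq x y).1 ((hall x hx).trans (hall y hy).symm))
  have hfiber : ∀ q : Quot (sameTC m K),
      (K.edgeFinset.filter (fun e => ∀ v ∈ e, φ v = q)).card + m
        = m * (Finset.univ.filter (fun v => φ v = q)).card := by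
    intro q
    obtain ⟨u, rfl⟩ := Quot.exists_rep q
    have hset : {v | sameTC m K u v} = ↑(Finset.univ.filter (fun v => φ v = φ u)) := by
      ext v
      simp only [Finset.coe_filter, Finset.mem_univ, true_and, Set.mem_setOf_eq]
      rw [hmkeq]
      exact ⟨fun h => hequiv.symm h, fun h => hequiv.symm h⟩
    have hsete : {e ∈ K.edgeSet | ∀ v ∈ e, v ∈ {v | sameTC m K u v}}
        = ↑(K.edgeFinset.filter (fun e => ∀ v ∈ e, φ v = φ u)) := by
      ext e
      simp only [Finset.coe_filter, mem_edgeFinset, Set.mem_setOf_eq]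
      constructor
      · rintro ⟨he, hall⟩
        refine ⟨he, fun v hv => ?_⟩
        rw [hmkeq]
        exact hequiv.symm (hall v hv)
      · rintro ⟨he, hall⟩
        refine ⟨he, fun v hv => hequiv.symm ((hmkeq _ _).1 (hall v hv))⟩
    have := h_class u
    rw [hsete, hset, Set.ncard_coe_finset, Set.ncard_coe_finset] at this
    exact this
  have hcrossset : {e ∈ K.edgeSet | ∃ x y, e = s(x, y) ∧ ¬ sameTC m K x y}
      = ↑(K.edgeFinset.filter crossP) := by
    ext e
    simp [hcrossP, mem_edgeFinset]
  have hEK : K.edgeSet.ncard = K.edgeFinset.card := Set.ncard_eq_toFinset_card' _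
  rw [hcrossset, Set.ncard_coe_finset, hEK, Nat.card_eq_fintype_card (α := X), hvert]
  have hsum : ∑ q : Quot (sameTC m K),
        ((K.edgeFinset.filter (fun e => ∀ v ∈ e, φ v = q)).card + m)
      = ∑ q : Quot (sameTC m K), m * (Finset.univ.filter (fun v => φ v = q)).card :=
    Finset.sum_congr rfl fun q _ => hfiber q
  rw [Finset.sum_add_distrib, ← Finset.mul_sum] at hsum
  simp only [Finset.sum_const, Finset.card_univ, smul_eq_mul, mul_one] at hsum
  rw [Nat.card_eq_fintype_card]
  linarith [hsum, hsplit, hwithin]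

end Stmt8Aux

/-- If `H` is minimally `m`-tree-connected and `S ⊆ V(H)`, then
`Ω_m(H \ S) = Σ_{v∈S} (d_H(v)/m − 1) + 1 − e_H(S)/m`. -/
theorem stmt_8 {V : Type*} [Fintype V] (H : SimpleGraph V) (m : ℕ) (hm : 0 < m)
    (h1 : IsTreeConnected m H) (h2 : H.edgeSet.ncard = m * (Fintype.card V - 1))
    (S : Finset V) :
    Omega m (H.induce (↑S)ᶜ) =
      ∑ v ∈ S, ((deg H v : ℝ) / m - 1) + 1 - (edgesIn H (↑S) : ℝ) / m := by
  classical
  obtain ⟨T, hle, hct, hdisj⟩ := h1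
  haveI : Nonempty V := ((hct ⟨0, hm⟩).1).nonempty
  have htree : ∀ i, (T i).IsTree := fun i => ⟨(hct i).1, (hct i).2⟩
  have hcardT : ∀ i, (T i).edgeFinset.card + 1 = Fintype.card V := fun i =>
    (htree i).card_edgeFinset
  have hn1 : 1 ≤ Fintype.card V := Fintype.card_pos
  -- the trees decompose the edge set of `H`
  have hdisjF : ∀ i j : Fin m, i ≠ j → Disjoint (T i).edgeFinset (T j).edgeFinset := by
    intro i j hij
    rw [Finset.disjoint_left]
    intro e hei hej
    rw [mem_edgeFinset] at hei hej
    exact Set.disjoint_left.1 (hdisj i j hij) hei hej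
  have hsub : (Finset.univ : Finset (Fin m)).biUnion (fun i => (T i).edgeFinset)
      ⊆ H.edgeFinset := by
    intro e he
    rw [Finset.mem_biUnion] at he
    obtain ⟨i, _, he⟩ := he
    rw [mem_edgeFinset] at he ⊢
    exact (edgeSet_subset_edgeSet.2 (hle i)) he
  have hbi := Finset.card_biUnion (fun i _ => fun j _ hij => hdisjF i j hij)
    (s := Finset.univ) (t := fun i => (T i).edgeFinset)
  have hEH : H.edgeSet.ncard = H.edgeFinset.card := Set.ncard_eq_toFinset_card' _
  have hsumT : ∑ i : Fin m, (T i).edgeFinset.card = m * (Fintype.card V - 1) := by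
    rw [Finset.sum_congr rfl (fun i _ => show (T i).edgeFinset.card = Fintype.card V - 1 by
      have := hcardT i; omega)]
    simp [mul_comm]
  have hcover : ∀ e ∈ H.edgeSet, ∃ i, e ∈ (T i).edgeSet := by
    have heq : (Finset.univ : Finset (Fin m)).biUnion (fun i => (T i).edgeFinset)
        = H.edgeFinset := by
      refine Finset.eq_of_subset_of_card_le hsub ?_
      rw [hbi, hsumT, ← hEH, h2]
    intro e he
    have : e ∈ (Finset.univ : Finset (Fin m)).biUnion (fun i => (T i).edgeFinset) := by
      rw [heq, mem_edgeFinset]; exact he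
    rw [Finset.mem_biUnion] at this
    obtain ⟨i, -, hi⟩ := this
    rw [mem_edgeFinset] at hi
    exact ⟨i, hi⟩
  -- upper bound hypothesis for the induced graph
  set K := H.induce ((↑S : Set V))ᶜ with hK
  have hup : ∀ C : Set ↥((↑S : Set V)ᶜ), C.Nonempty →
      {e ∈ K.edgeSet | ∀ v ∈ e, v ∈ C}.ncard + m ≤ m * C.ncard := by
    intro C hC
    have htr := stmt8_ncard_inside_induce H ((↑S : Set V))ᶜ C
    have himg : (Subtype.val '' C).Nonempty := hC.image _
    have hupper := stmt8_decomp_inside_upper hle (fun i => (htree i).IsAcyclic) hcover himg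
    rw [Set.ncard_image_of_injective _ Subtype.val_injective] at hupper
    rw [hK, htr]
    exact hupper
  have hmain := stmt8_omega_count m K hup
  -- arithmetic relations
  have hEK : K.edgeSet.ncard = edgesIn H ((↑S : Set V))ᶜ := by
    have htr := stmt8_ncard_inside_induce H ((↑S : Set V))ᶜ Set.univ
    rw [Subtype.coe_image_univ, ← stmt8_edgeSet_eq_inside_univ] at htr
    exact htr
  have hver : Nat.card ↥((↑S : Set V)ᶜ) + S.card = Fintype.card V := by
    rw [Nat.card_coe_set_eq]
    have := Set.ncard_add_ncard_compl (↑S : Set V) (Set.toFinite _) (Set.toFinite _)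
    rw [Set.ncard_coe_finset] at this
    rw [Nat.card_eq_fintype_card] at this
    omega
  have hhs := stmt8_handshake H S
  have hE2 : H.edgeSet.ncard + m = m * Fintype.card V := by
    obtain ⟨k, hk⟩ : ∃ k, Fintype.card V = k + 1 := ⟨Fintype.card V - 1, by omega⟩
    rw [h2, hk]
    simp only [Nat.add_sub_cancel]
    ring
  -- pass to the reals
  have hmR : (m : ℝ) ≠ 0 := Nat.cast_ne_zero.2 hm.ne'
  rw [Omega]
  have c1 : (m : ℝ) * Nat.card (Quot (sameTC m K)) + K.edgeSet.ncard
      = m * Nat.card ↥((↑S : Set V)ᶜ)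
        + ({e ∈ K.edgeSet | ∃ x y, e = s(x, y) ∧ ¬ sameTC m K x y}.ncard : ℝ) := by
    exact_mod_cast hmain
  have c2 : (Nat.card ↥((↑S : Set V)ᶜ) : ℝ) + S.card = Fintype.card V := by
    exact_mod_cast hver
  have c3 : (K.edgeSet.ncard : ℝ) = edgesIn H ((↑S : Set V))ᶜ := by exact_mod_cast hEK
  have c4 : (∑ v ∈ S, (H.neighborSet v).ncard : ℝ)
        + (edgesIn H ((↑S : Set V))ᶜ : ℝ)
      = (H.edgeSet.ncard : ℝ) + (edgesIn H (↑S : Set V) : ℝ) := by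
    exact_mod_cast hhs
  have c5 : (H.edgeSet.ncard : ℝ) + m = m * Fintype.card V := by exact_mod_cast hE2
  have hdegsum : ∑ v ∈ S, ((deg H v : ℝ) / m - 1)
      = (∑ v ∈ S, (H.neighborSet v).ncard : ℝ) / m - S.card := by
    rw [Finset.sum_sub_distrib]
    simp only [Finset.sum_const, nsmul_eq_mul, mul_one]
    congr 1
    rw [Finset.sum_div]
    refine Finset.sum_congr rfl fun v _ => ?_
    rfl
  rw [hdegsum]
  have c4' : (∑ v ∈ S, (H.neighborSet v).ncard : ℝ)
        + (edgesIn H ((↑S : Set V))ᶜ : ℝ)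
      = (H.edgeSet.ncard : ℝ) + (edgesIn H (↑S : Set V) : ℝ) := c4
  set a1 : ℕ := Nat.card (Quot (sameTC m K)) with ha1
  set a2 : ℕ := {e ∈ K.edgeSet | ∃ x y, e = s(x, y) ∧ ¬ sameTC m K x y}.ncard with ha2
  set a3 : ℕ := K.edgeSet.ncard with ha3
  set a4 : ℕ := Nat.card ↥((↑S : Set V)ᶜ) with ha4
  set a5 : ℕ := edgesIn H ((↑S : Set V)ᶜ) with ha5
  set a6 : ℕ := edgesIn H (↑S : Set V) with ha6
  set a7 : ℕ := ∑ v ∈ S, (H.neighborSet v).ncard with ha7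
  set a8 : ℕ := H.edgeSet.ncard with ha8
  set a9 : ℕ := Fintype.card V with ha9
  set a10 : ℕ := S.card with ha10
  field_simp
  linear_combination c1 + (m : ℝ) * c2 - c3 - c4 - c5
end
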